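/- arXiv:1306.3698 — 3 statements merged into one kernel-verified Lean document; each statement's English description precedes it below -/
import Mathlib

section
/- Let p be an odd prime and k with 0 ≤ k ≤ p/2, and let χ be the character of the irreducible 𝔖ₚ-representation of shape (p-k, k). Let b ∈ 𝔖ₚ be an involution that is a product of (p-1)/2 disjoint 2-cycles and one fixed point. Then χ(b) = 0 if k is odd, and χ(b) = C((p-1)/2, m) - C((p-1)/2, m-1) if k = 2m is even. -/
/-- The character of the irreducible `𝔖ₚ`-representation (Specht module) indexed by
the two-row partition `(p-k, k)`.  By Young's rule the permutation module on
`k`-element subsets decomposes as `M^{(p-k,k)} = ⊕_{j ≤ k} S^{(p-j,j)}`, so this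
character equals `(#k-subsets fixed by g) - (#(k-1)-subsets fixed by g)`
(with the convention that for `k = 0` the second term is `0`). -/
def twoRowChar (p k : ℕ) (g : Equiv.Perm (Fin p)) : ℤ :=
  (((Finset.univ : Finset (Fin p)).powersetCard k).filter
      (fun S => S.image g = S)).card -
    (if k = 0 then 0 else
      (((Finset.univ : Finset (Fin p)).powersetCard (k - 1)).filter
        (fun S => S.image g = S)).card)

/-!
Order the ground set. An involution `b` with unique fixed point `a` splits it into `{a}`, the
points `x` with `x < b x`, and their images. A `b`-invariant set `S` is the union of its part
`T = {x ∈ S | x < b x}`, of `b T`, and possibly of `a`; so `#S = 2 #T + [a ∈ S]`, and the parity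
of `#S` decides whether `a ∈ S`. Hence `S ↦ T` is a bijection from the invariant `j`-subsets onto
the `⌊j/2⌋`-subsets of a set with `(p - 1)/2` elements, and `twoRowChar` is a difference of two
such binomial coefficients.
-/

open Finset Function

namespace Equiv.Perm

variable {α : Type*} [LinearOrder α] {b : Perm α} {S T X : Finset α} {a : α}

section Involutive

variable (hb : Involutive b)
include hb

theorem filter_apply_lt_eq_image (hS : S.image b = S) :
    S.filter (fun x => b x < x) = (S.filter fun x => x < b x).image b := by
  ext y
  simp only [mem_filter, mem_image]
  constructor
  · rintro ⟨hy, hlt⟩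
    exact ⟨b y, ⟨hS ▸ mem_image_of_mem b hy, by rwa [hb y]⟩, hb y⟩
  · rintro ⟨x, ⟨hx, hlt⟩, rfl⟩
    exact ⟨hS ▸ mem_image_of_mem b hx, by rwa [hb x]⟩

theorem eq_union_of_image_eq (hS : S.image b = S) :
    S = (S.filter fun x => x < b x) ∪ (S.filter fun x => x < b x).image b ∪
      S.filter fun x => b x = x := by
  rw [← filter_apply_lt_eq_image hb hS, ← filter_or, ← filter_or, filter_true_of_mem]
  intro x _
  rcases lt_trichotomy x (b x) with h | h | h
  exacts [Or.inl (Or.inl h), Or.inr h.symm, Or.inl (Or.inr h)]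

theorem card_eq_of_image_eq (hS : S.image b = S) :
    #S = 2 * #(S.filter fun x => x < b x) + #(S.filter fun x => b x = x) := by
  have hfalling : #(S.filter fun x => b x < x) = #(S.filter fun x => x < b x) := by
    rw [filter_apply_lt_eq_image hb hS, card_image_of_injective _ b.injective]
  calc #S = ∑ x ∈ S, ((if x < b x then 1 else 0) + (if b x < x then 1 else 0) +
        (if b x = x then 1 else 0)) := by
        rw [card_eq_sum_ones]
        refine sum_congr rfl fun x _ => ?_
        rcases lt_trichotomy x (b x) with h | h | h
        · simp [h, h.ne', not_lt_of_gt h]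
        · simp [← h]
        · simp [h, h.ne, not_lt_of_gt h]
    _ = _ := by simp only [sum_add_distrib, ← card_filter, hfalling]; ring

theorem image_union_image_union (hX : ∀ x ∈ X, b x = x) :
    (T ∪ T.image b ∪ X).image b = T ∪ T.image b ∪ X := by
  rw [image_union, image_union, image_image, hb.comp_self, image_id, union_comm (T.image b),
    image_congr hX, image_id']

theorem apply_ne_of_mem_union_image (hT : ∀ x ∈ T, x < b x) {x : α}
    (hx : x ∈ T ∪ T.image b) : b x ≠ x := by
  rcases mem_union.mp hx with hx | hx
  · exact (hT x hx).ne'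
  · obtain ⟨y, hy, rfl⟩ := mem_image.mp hx
    rw [hb y]
    exact (hT y hy).ne

theorem filter_lt_apply_union_image_union (hT : ∀ x ∈ T, x < b x) (hX : ∀ x ∈ X, b x = x) :
    (T ∪ T.image b ∪ X).filter (fun x => x < b x) = T := by
  rw [filter_union, filter_union, filter_true_of_mem hT, filter_false_of_mem,
    filter_false_of_mem fun x hx => (hX x hx).not_gt, union_empty, union_empty]
  rintro _ hy
  obtain ⟨x, hx, rfl⟩ := mem_image.mp hy
  rw [hb x]
  exact not_lt_of_gt (hT x hx)

theorem filter_apply_eq_self_union_image_union (hT : ∀ x ∈ T, x < b x)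
    (hX : ∀ x ∈ X, b x = x) : (T ∪ T.image b ∪ X).filter (fun x => b x = x) = X := by
  rw [filter_union, filter_true_of_mem hX, filter_false_of_mem, empty_union]
  exact fun x hx => apply_ne_of_mem_union_image hb hT hx

theorem card_union_image_union (hT : ∀ x ∈ T, x < b x) (hX : ∀ x ∈ X, b x = x) :
    #(T ∪ T.image b ∪ X) = 2 * #T + #X := by
  rw [card_eq_of_image_eq hb (image_union_image_union hb hX),
    filter_lt_apply_union_image_union hb hT hX, filter_apply_eq_self_union_image_union hb hT hX]

end Involutive

theorem filter_apply_eq_self (ha : ∀ x, b x = x ↔ x = a) :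
    S.filter (fun x => b x = x) = if a ∈ S then {a} else ∅ := by
  rw [filter_congr fun x _ => ha x, filter_eq']

theorem card_filter_apply_eq_self (ha : ∀ x, b x = x ↔ x = a) :
    #(S.filter fun x => b x = x) = if a ∈ S then 1 else 0 := by
  rw [filter_apply_eq_self ha, apply_ite card, card_singleton, card_empty]

theorem mem_iff_odd_card (hb : Involutive b) (ha : ∀ x, b x = x ↔ x = a)
    (hS : S.image b = S) : a ∈ S ↔ Odd #S := by
  rw [card_eq_of_image_eq hb hS, card_filter_apply_eq_self ha]
  split_ifs with h <;> simp [h, parity_simps]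

theorem two_mul_card_filter_lt_apply_add_one [Fintype α] (hb : Involutive b)
    (ha : ∀ x, b x = x ↔ x = a) :
    2 * #(univ.filter fun x => x < b x) + 1 = Fintype.card α := by
  have h := card_eq_of_image_eq hb (image_univ_of_surjective b.surjective)
  rwa [card_filter_apply_eq_self ha, if_pos (mem_univ a), card_univ, eq_comm] at h

theorem card_filter_powersetCard_image_eq_choose [Fintype α] (hb : Involutive b)
    (ha : ∀ x, b x = x ↔ x = a) (j : ℕ) :
    #((univ.powersetCard j).filter fun S => S.image b = S) =
      (#(univ.filter fun x => x < b x)).choose (j / 2) := by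
  rw [← card_powersetCard]
  set X : Finset α := if Odd j then {a} else ∅
  have hX : ∀ x ∈ X, b x = x := fun x hx => by
    unfold X at hx
    split_ifs at hx
    · rwa [ha, ← mem_singleton]
    · simp at hx
  refine card_bij' (fun S _ => S.filter fun x => x < b x) (fun T _ => T ∪ T.image b ∪ X)
    ?_ ?_ ?_ ?_
  · intro S hS
    simp only [mem_filter, mem_powersetCard, subset_univ, true_and] at hS ⊢
    refine ⟨filter_subset_filter _ (subset_univ S), ?_⟩
    have := card_eq_of_image_eq hb hS.2
    rw [card_filter_apply_eq_self ha, hS.1] at this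
    split_ifs at this <;> omega
  · intro T hT
    rw [mem_powersetCard] at hT
    have hT_rising : ∀ x ∈ T, x < b x := fun x hx => (mem_filter.mp (hT.1 hx)).2
    simp only [mem_filter, mem_powersetCard, subset_univ, true_and]
    refine ⟨?_, image_union_image_union hb hX⟩
    rw [card_union_image_union hb hT_rising hX, hT.2]
    unfold X
    split_ifs with h
    · rw [card_singleton, Nat.two_mul_div_two_add_one_of_odd h]
    · rw [card_empty, add_zero, Nat.two_mul_div_two_of_even (Nat.not_odd_iff_even.mp h)]
  · intro S hS
    simp only [mem_filter, mem_powersetCard, subset_univ, true_and] at hS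
    conv_rhs => rw [eq_union_of_image_eq hb hS.2]
    rw [filter_apply_eq_self ha]
    exact congrArg _ (if_congr (by rw [mem_iff_odd_card hb ha hS.2, hS.1]) rfl rfl).symm
  · intro T hT
    rw [mem_powersetCard] at hT
    exact filter_lt_apply_union_image_union hb (fun x hx => (mem_filter.mp (hT.1 hx)).2) hX

end Equiv.Perm

theorem twoRowChar_involution_general
    (p : ℕ) (k : ℕ)
    (b : Equiv.Perm (Fin p)) (hb : b * b = 1)
    (hfix : (Finset.univ.filter (fun x : Fin p => b x = x)).card = 1) :
    (Odd k → twoRowChar p k b = 0) ∧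
      (∀ m : ℕ, k = 2 * m →
        twoRowChar p k b =
          (((p - 1) / 2).choose m : ℤ) -
            (if m = 0 then 0 else (((p - 1) / 2).choose (m - 1) : ℤ))) := by
  have hinv : Involutive b := fun x => by rw [← Equiv.Perm.mul_apply, hb, Equiv.Perm.one_apply]
  obtain ⟨a, hA⟩ := card_eq_one.mp hfix
  have ha : ∀ x, b x = x ↔ x = a := fun x => by simpa using Finset.ext_iff.mp hA x
  have hn : #(univ.filter fun x => x < b x) = (p - 1) / 2 := by
    have := Equiv.Perm.two_mul_card_filter_lt_apply_add_one hinv ha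
    rw [Fintype.card_fin] at this
    omega
  have hcount (j : ℕ) : #((univ.powersetCard j).filter fun S => S.image b = S) =
      ((p - 1) / 2).choose (j / 2) := by
    rw [Equiv.Perm.card_filter_powersetCard_image_eq_choose hinv ha, hn]
  refine ⟨fun hk => ?_, ?_⟩
  · rw [twoRowChar, if_neg (by rintro rfl; simp at hk), hcount, hcount]
    obtain ⟨m, rfl⟩ := hk
    rw [show (2 * m + 1 - 1) / 2 = (2 * m + 1) / 2 by omega, sub_self]
  · rintro (_ | m) rfl
    · rw [twoRowChar, if_pos rfl, if_pos rfl, hcount]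
      simp
    · rw [twoRowChar, if_neg (by omega), if_neg m.succ_ne_zero, hcount, hcount,
        show (2 * (m + 1) - 1) / 2 = m by omega, Nat.mul_div_cancel_left _ two_pos,
        Nat.add_sub_cancel]

/-- For `p` an odd prime, `0 ≤ k ≤ p/2`, and `b` an involution in `𝔖ₚ` that is a
product of `(p-1)/2` disjoint 2-cycles and one fixed point, the character of the
Specht module of shape `(p-k,k)` satisfies `χ(b) = 0` if `k` is odd and
`χ(b) = C((p-1)/2, m) - C((p-1)/2, m-1)` if `k = 2m` (with `C(n,-1) = 0`,
encoded by the `if m = 0` clause). -/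
theorem twoRowChar_involution
    (p : ℕ) (hp : p.Prime) (hodd : Odd p) (k : ℕ) (hk : 2 * k ≤ p)
    (b : Equiv.Perm (Fin p)) (hb : b * b = 1)
    (hfix : (Finset.univ.filter (fun x : Fin p => b x = x)).card = 1) :
    (Odd k → twoRowChar p k b = 0) ∧
      (∀ m : ℕ, k = 2 * m →
        twoRowChar p k b =
          (((p - 1) / 2).choose m : ℤ) -
            (if m = 0 then 0 else (((p - 1) / 2).choose (m - 1) : ℤ))) :=
  twoRowChar_involution_general p k b hb hfix
end

section
/- Let p ≥ 5 be prime and let k be an odd integer with 3 ≤ k ≤ (p-1)/2 (so both rows of (p-k,k) have size less than p). Then 2p divides C(p,k) - C(p,k-1). -/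
/-- For `p ≥ 5` prime and odd `k` with `3 ≤ k ≤ (p-1)/2`, the dimension
`C(p,k) - C(p,k-1)` of the Specht module of shape `(p-k,k)` is divisible by `2p`. -/
theorem two_p_dvd_specht_dimension_odd_row
    (p : ℕ) (hp : p.Prime) (hp5 : 5 ≤ p)
    (k : ℕ) (hkodd : Odd k) (hk3 : 3 ≤ k) (hk : 2 * k ≤ p - 1) :
    (2 * p : ℤ) ∣ ((p.choose k : ℤ) - (p.choose (k - 1) : ℤ)) := by
  have hkp : k < p := by omega
  have hk1p : k - 1 < p := by omega
  have hpodd : Odd p := hp.odd_of_ne_two (by omega)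
  -- p divides both binomial coefficients
  have hpd1 : (p : ℤ) ∣ (p.choose k : ℤ) :=
    Int.natCast_dvd_natCast.mpr (hp.dvd_choose_self (by omega) hkp)
  have hpd2 : (p : ℤ) ∣ (p.choose (k - 1) : ℤ) :=
    Int.natCast_dvd_natCast.mpr (hp.dvd_choose_self (by omega) hk1p)
  have hpdiff : (p : ℤ) ∣ ((p.choose k : ℤ) - (p.choose (k - 1) : ℤ)) :=
    dvd_sub hpd1 hpd2
  -- 2 divides C(p+1, k) = C(p, k-1) + C(p, k)
  have hkey : (p + 1) * p.choose (k - 1) = (p + 1).choose k * k := by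
    have := Nat.add_one_mul_choose_eq p (k - 1)
    have hk' : k - 1 + 1 = k := by omega
    simp only [Nat.succ_eq_add_one, hk'] at this
    exact this
  have h2 : 2 ∣ (p + 1).choose k * k := by
    rw [← hkey]
    obtain ⟨m, hm⟩ := hpodd
    exact Dvd.dvd.mul_right (Dvd.intro (m + 1) (by omega)) _
  have hcopk : Nat.Coprime 2 k := Nat.coprime_two_left.mpr hkodd
  have h2c : 2 ∣ (p + 1).choose k := hcopk.dvd_of_dvd_mul_right h2
  have hsplit : (p + 1).choose k = p.choose (k - 1) + p.choose k := by
    have := Nat.choose_succ_succ' p (k - 1)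
    have hk' : k - 1 + 1 = k := by omega
    rw [hk'] at this
    exact this
  have h2sum : (2 : ℤ) ∣ ((p.choose (k - 1) : ℤ) + (p.choose k : ℤ)) := by
    rw [hsplit] at h2c
    exact_mod_cast Int.natCast_dvd_natCast.mpr h2c
  have h2diff : (2 : ℤ) ∣ ((p.choose k : ℤ) - (p.choose (k - 1) : ℤ)) := by
    have : ((p.choose k : ℤ) - (p.choose (k - 1) : ℤ)) =
        ((p.choose (k - 1) : ℤ) + (p.choose k : ℤ)) - 2 * (p.choose (k - 1) : ℤ) := by ring
    rw [this]
    exact dvd_sub h2sum ⟨_, rfl⟩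
  have hcop2p : IsCoprime (2 : ℤ) (p : ℤ) := by
    have : Nat.Coprime 2 p := Nat.coprime_two_left.mpr hpodd
    exact_mod_cast Nat.isCoprime_iff_coprime.mpr this
  exact hcop2p.mul_dvd h2diff hpdiff
end

section
/- Let p ≥ 3 be prime and k = 2m an even integer with 2 ≤ k ≤ (p-1)/2. Set α = C(p,k) - C(p,k-1) and β = C((p-1)/2, m) - C((p-1)/2, m-1). Then 2p divides α + pβ; equivalently, the quantity (1/2p)(α + pβ) is a nonnegative integer. -/
/-- For `p ≥ 3` prime and `k = 2m` even with `2 ≤ k ≤ (p-1)/2`, setting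
`α = C(p,k) - C(p,k-1)` and `β = C((p-1)/2,m) - C((p-1)/2,m-1)`, the integer
`α + pβ` is nonnegative and divisible by `2p`; equivalently `(α + pβ)/(2p)` is a
nonnegative integer (the multiplicity of `[p-k,k]` in the dihedral coinvariants). -/
theorem two_p_dvd_alpha_add_p_beta
    (p : ℕ) (hp : p.Prime) (hp3 : 3 ≤ p)
    (m : ℕ) (hm : 1 ≤ m) (hk : 2 * (2 * m) ≤ p - 1) :
    (2 * p : ℤ) ∣
        (((p.choose (2 * m) : ℤ) - (p.choose (2 * m - 1) : ℤ)) +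
          (p : ℤ) * ((((p - 1) / 2).choose m : ℤ) - (((p - 1) / 2).choose (m - 1) : ℤ))) ∧
      0 ≤ (((p.choose (2 * m) : ℤ) - (p.choose (2 * m - 1) : ℤ)) +
          (p : ℤ) * ((((p - 1) / 2).choose m : ℤ) - (((p - 1) / 2).choose (m - 1) : ℤ))) := by
  have hp2 : p ≠ 2 := by omega
  have hodd : Odd p := hp.odd_of_ne_two hp2
  obtain ⟨t, ht⟩ := hodd
  have hq : (p - 1) / 2 = t := by omega
  have hpd : p / 2 = t := by omega
  have hpm : p % 2 = 1 := by omega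
  have h2m : 2 * m < p := by omega
  have h2m1 : 2 * m - 1 < p := by omega
  have h2m1ne : 2 * m - 1 ≠ 0 := by omega
  -- p divides both big binomials
  have hdA : (p : ℤ) ∣ (p.choose (2 * m) : ℤ) := by
    exact_mod_cast Int.natCast_dvd_natCast.2 (hp.dvd_choose_self (by omega) h2m)
  have hdB : (p : ℤ) ∣ (p.choose (2 * m - 1) : ℤ) := by
    exact_mod_cast Int.natCast_dvd_natCast.2 (hp.dvd_choose_self h2m1ne h2m1)
  set C : ℤ := (((p - 1) / 2).choose m : ℤ)
  set D : ℤ := (((p - 1) / 2).choose (m - 1) : ℤ)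
  set X : ℤ := ((p.choose (2 * m) : ℤ) - (p.choose (2 * m - 1) : ℤ)) + (p : ℤ) * (C - D)
  have hpX : (p : ℤ) ∣ X := by
    have : (p : ℤ) ∣ (p : ℤ) * (C - D) := Dvd.intro _ rfl
    exact dvd_add (dvd_sub hdA hdB) this
  -- Lucas mod 2
  haveI : Fact (Nat.Prime 2) := ⟨Nat.prime_two⟩
  have hL1 : p.choose (2 * m) ≡ ((p - 1) / 2).choose m [MOD 2] := by
    have := Choose.choose_modEq_choose_mod_mul_choose_div_nat (p := 2) (n := p) (k := 2 * m)
    simpa [hpm, hpd, hq, Nat.mul_div_cancel_left, Nat.mul_mod_right] using this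
  have hL2 : p.choose (2 * m - 1) ≡ ((p - 1) / 2).choose (m - 1) [MOD 2] := by
    have := Choose.choose_modEq_choose_mod_mul_choose_div_nat (p := 2) (n := p) (k := 2 * m - 1)
    have e1 : (2 * m - 1) % 2 = 1 := by omega
    have e2 : (2 * m - 1) / 2 = m - 1 := by omega
    simpa [hpm, hpd, hq, e1, e2] using this
  have h1Z : (p.choose (2 * m) : ℤ) ≡ C [ZMOD 2] := Int.natCast_modEq_iff.2 hL1
  have h2Z : (p.choose (2 * m - 1) : ℤ) ≡ D [ZMOD 2] := Int.natCast_modEq_iff.2 hL2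
  have hpZ : (p : ℤ) ≡ 1 [ZMOD 2] := by
    have : p ≡ 1 [MOD 2] := by unfold Nat.ModEq; omega
    exact_mod_cast Int.natCast_modEq_iff.2 this
  have h2X : (2 : ℤ) ∣ X := by
    have hX : X ≡ (C - D) + 1 * (C - D) [ZMOD 2] :=
      Int.ModEq.add (Int.ModEq.sub h1Z h2Z) (Int.ModEq.mul hpZ (Int.ModEq.refl _))
    have : X ≡ 2 * (C - D) [ZMOD 2] := by
      calc X ≡ (C - D) + 1 * (C - D) [ZMOD 2] := hX
        _ = 2 * (C - D) := by ring
    have hd : (2 : ℤ) ∣ 2 * (C - D) - X := this.dvd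
    have h2cd : (2 : ℤ) ∣ 2 * (C - D) := Dvd.intro _ rfl
    have := dvd_sub h2cd hd
    simpa using this
  -- combine
  have hcop : IsCoprime (2 : ℤ) (p : ℤ) := by
    rw [Int.isCoprime_iff_gcd_eq_one]
    have : Nat.Coprime 2 p := (Nat.coprime_primes Nat.prime_two hp).2 (Ne.symm hp2)
    simpa [Int.gcd] using this
  constructor
  · exact hcop.mul_dvd h2X hpX
  · have hA : p.choose (2 * m - 1) ≤ p.choose (2 * m) := by
      have : 2 * m - 1 < p / 2 := by omega
      have h := Nat.choose_le_succ_of_lt_half_left (r := 2 * m - 1) (n := p) this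
      have e : 2 * m - 1 + 1 = 2 * m := by omega
      rwa [e] at h
    have hB : ((p - 1) / 2).choose (m - 1) ≤ ((p - 1) / 2).choose m := by
      have : m - 1 < (p - 1) / 2 / 2 := by omega
      have h := Nat.choose_le_succ_of_lt_half_left (r := m - 1) (n := (p - 1) / 2) this
      have e : m - 1 + 1 = m := by omega
      rwa [e] at h
    have h1 : (0 : ℤ) ≤ (p.choose (2 * m) : ℤ) - (p.choose (2 * m - 1) : ℤ) := by
      exact_mod_cast sub_nonneg.2 (Int.ofNat_le.2 hA)
    have h2 : (0 : ℤ) ≤ C - D := by simp only [C, D]; exact_mod_cast sub_nonneg.2 (Int.ofNat_le.2 hB)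
    positivity
end
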